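/- For any two density matrices ρ, σ on a finite-dimensional Hilbert space, the super-fidelity is at most 1: Tr(ρσ) + √(1 - Tr ρ²)·√(1 - Tr σ²) ≤ 1. -/

import Mathlib

open Matrix
open scoped ComplexOrder

/-!
Cauchy–Schwarz for the Hilbert–Schmidt inner product gives `Tr(ρσ) ≤ √(Tr ρ²) √(Tr σ²)`, and for a
density matrix with eigenvalues `λᵢ ≥ 0` one has `Tr ρ² = ∑ λᵢ² ≤ (∑ λᵢ)² = 1`. With
`a = Tr ρ²` and `b = Tr σ²` in `[0, 1]` it remains to see `√a √b + √(1 - a) √(1 - b) ≤ 1`, which is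
AM–GM applied to each of the two products.
-/

namespace Matrix

variable {𝕜 : Type*} [RCLike 𝕜] {ι : Type*} [Fintype ι]

open RCLike

theorem re_trace_conjTranspose_mul_le (A B : Matrix ι ι 𝕜) :
    re (Aᴴ * B).trace ≤ √(re (Aᴴ * A).trace) * √(re (Bᴴ * B).trace) := by
  classical
  let := toMatrixSeminormedAddCommGroup (1 : Matrix ι ι 𝕜) PosSemidef.one
  let := toMatrixInnerProductSpace (1 : Matrix ι ι 𝕜) PosSemidef.one
  have inner_eq_trace (X Y : Matrix ι ι 𝕜) : inner 𝕜 X Y = (Xᴴ * Y).trace := by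
    change (Y * 1 * Xᴴ).trace = _
    rw [mul_one, trace_mul_comm]
  simpa only [norm_eq_sqrt_re_inner (𝕜 := 𝕜), inner_eq_trace] using re_inner_le_norm (𝕜 := 𝕜) A B

theorem IsHermitian.trace_cfc [DecidableEq ι] {A : Matrix ι ι 𝕜} (hA : A.IsHermitian)
    (f : ℝ → ℝ) :
    (cfc f A).trace = ∑ i, (f (hA.eigenvalues i) : 𝕜) := by
  rw [hA.cfc_eq, IsHermitian.cfc, Unitary.conjStarAlgAut_apply, trace_mul_cycle,
    Unitary.coe_star_mul_self, one_mul, trace_diagonal]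
  rfl

theorem IsHermitian.re_trace_mul_self [DecidableEq ι] {A : Matrix ι ι 𝕜} (hA : A.IsHermitian) :
    re (A * A).trace = ∑ i, hA.eigenvalues i ^ 2 := by
  rw [← sq, ← cfc_pow_id (R := ℝ) A 2 hA.isSelfAdjoint, hA.trace_cfc, map_sum]
  simp only [ofReal_re]

theorem IsHermitian.re_trace_mul_self_nonneg {A : Matrix ι ι 𝕜} (hA : A.IsHermitian) :
    0 ≤ re (A * A).trace := by
  classical
  rw [hA.re_trace_mul_self]
  positivity

theorem PosSemidef.re_trace_mul_self_le_sq {A : Matrix ι ι 𝕜} (hA : A.PosSemidef) :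
    re (A * A).trace ≤ re A.trace ^ 2 := by
  classical
  rw [hA.isHermitian.re_trace_mul_self, hA.isHermitian.trace_eq_sum_eigenvalues, map_sum]
  simp only [ofReal_re]
  exact Finset.sum_sq_le_sq_sum_of_nonneg fun i _ => hA.eigenvalues_nonneg i

end Matrix

theorem Real.sqrt_mul_sqrt_add_sqrt_one_sub_mul_sqrt_one_sub_le_one {a b : ℝ}
    (ha₀ : 0 ≤ a) (ha₁ : a ≤ 1) (hb₀ : 0 ≤ b) (hb₁ : b ≤ 1) :
    √a * √b + √(1 - a) * √(1 - b) ≤ 1 := by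
  have := Real.sq_sqrt ha₀
  have := Real.sq_sqrt hb₀
  have := Real.sq_sqrt (sub_nonneg.2 ha₁)
  have := Real.sq_sqrt (sub_nonneg.2 hb₁)
  nlinarith [sq_nonneg (√a - √b), sq_nonneg (√(1 - a) - √(1 - b))]

/-- For any two density matrices `ρ, σ` on a finite-dimensional
Hilbert space, the super-fidelity is at most `1`:
`Tr(ρσ) + √(1 - Tr ρ²)·√(1 - Tr σ²) ≤ 1`. -/
theorem stmt3 {n : ℕ} (ρ σ : Matrix (Fin n) (Fin n) ℂ)
    (hρ : ρ.PosSemidef) (hρtr : ρ.trace = 1)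
    (hσ : σ.PosSemidef) (hσtr : σ.trace = 1) :
    ((ρ * σ).trace).re +
      Real.sqrt (1 - ((ρ * ρ).trace).re) * Real.sqrt (1 - ((σ * σ).trace).re)
      ≤ 1 := by
  have hρσ := re_trace_conjTranspose_mul_le ρ σ
  rw [hρ.isHermitian.eq, hσ.isHermitian.eq] at hρσ
  have hρ₁ : ((ρ * ρ).trace).re ≤ 1 := by simpa [hρtr] using hρ.re_trace_mul_self_le_sq
  have hσ₁ : ((σ * σ).trace).re ≤ 1 := by simpa [hσtr] using hσ.re_trace_mul_self_le_sq
  have := Real.sqrt_mul_sqrt_add_sqrt_one_sub_mul_sqrt_one_sub_le_one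
    hρ.isHermitian.re_trace_mul_self_nonneg hρ₁ hσ.isHermitian.re_trace_mul_self_nonneg hσ₁
  exact (add_le_add_left hρσ _).trans this
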